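/- Let T = [t1 t2; t3 t4] with positive entries summing to 1, and let P_SKG be its ℓ-fold Kronecker power and P_CL(i,j) = (t1+t2)^{z_i}(t3+t4)^{ℓ-z_i}(t1+t3)^{z_j}(t2+t4)^{ℓ-z_j} the associated Chung-Lu matrix. Then P_SKG and P_CL have identical row sums and identical column sums: for every i, Σ_j P_SKG(i,j) = Σ_j P_CL(i,j), and for every j, Σ_i P_SKG(i,j) = Σ_i P_CL(i,j). -/

import Mathlib

/-!
Split an index of `Fin (2 ^ (ℓ + 1))` into its top bit and its `ℓ` low bits. The Kronecker power
then factors as `P_{ℓ+1}((a, b), (c, d)) = T a c * P_ℓ(b, d)` and the zero-bit count as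
`z_{(a, b)} = z_b + [a = 0]`, so induction on `ℓ` shows that row `i` of `P_SKG` sums to
`(t1 + t2) ^ z_i * (t3 + t4) ^ (ℓ - z_i)`, while the column factors of `P_CL` sum to
`(t1 + t2 + t3 + t4) ^ ℓ = 1`. Columns follow by transposing `T`.
-/

open Finset

noncomputable section

/-- The ℓ-fold Kronecker power of a 2×2 real matrix, indexed by `Fin (2^ℓ)`,
identifying an index with its ℓ-bit binary representation. -/
def kronPow : (ℓ : ℕ) → Matrix (Fin 2) (Fin 2) ℝ → Matrix (Fin (2 ^ ℓ)) (Fin (2 ^ ℓ)) ℝ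
  | 0, _ => 1
  | ℓ + 1, T => fun i j =>
      T ⟨i.val / 2 ^ ℓ, Nat.div_lt_of_lt_mul (pow_succ 2 ℓ ▸ i.isLt)⟩
        ⟨j.val / 2 ^ ℓ, Nat.div_lt_of_lt_mul (pow_succ 2 ℓ ▸ j.isLt)⟩
      * kronPow ℓ T
          ⟨i.val % 2 ^ ℓ, Nat.mod_lt _ (by positivity)⟩
          ⟨j.val % 2 ^ ℓ, Nat.mod_lt _ (by positivity)⟩

/-- Number of zero bits among the ℓ low-order bits of `i`. -/
def zeroBits (ℓ i : ℕ) : ℕ :=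
  ((Finset.range ℓ).filter (fun k => i / 2 ^ k % 2 = 0)).card

/-- Number of bit positions (among the ℓ low-order ones) where both `i` and `j` have bit zero. -/
def commonZeros (ℓ i j : ℕ) : ℕ :=
  ((Finset.range ℓ).filter (fun k => i / 2 ^ k % 2 = 0 ∧ j / 2 ^ k % 2 = 0)).card

open scoped Matrix

/-- `(a, b) ↦ b + 2 ^ ℓ * a`: `a` is the top bit, the one read by the outer factor of `kronPow`. -/
def topBitEquiv (ℓ : ℕ) : Fin 2 × Fin (2 ^ ℓ) ≃ Fin (2 ^ (ℓ + 1)) :=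
  finProdFinEquiv.trans (finCongr (pow_succ' 2 ℓ).symm)

@[simp]
lemma topBitEquiv_apply_val (ℓ : ℕ) (p : Fin 2 × Fin (2 ^ ℓ)) :
    (topBitEquiv ℓ p).val = p.2.val + 2 ^ ℓ * p.1.val := rfl

lemma sum_fin_two_pow_succ {M : Type*} [AddCommMonoid M] (ℓ : ℕ) (f : Fin (2 ^ (ℓ + 1)) → M) :
    ∑ x, f x = ∑ a : Fin 2, ∑ b : Fin (2 ^ ℓ), f (topBitEquiv ℓ (a, b)) := by
  rw [← (topBitEquiv ℓ).sum_comp, Fintype.sum_prod_type]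

lemma add_two_pow_mul_div_two_pow {ℓ b : ℕ} (hb : b < 2 ^ ℓ) (a : ℕ) :
    (b + 2 ^ ℓ * a) / 2 ^ ℓ = a := by
  rw [Nat.add_mul_div_left _ _ (by positivity), Nat.div_eq_of_lt hb, zero_add]

lemma add_two_pow_mul_mod_two_pow {ℓ b : ℕ} (hb : b < 2 ^ ℓ) (a : ℕ) :
    (b + 2 ^ ℓ * a) % 2 ^ ℓ = b := by
  rw [Nat.add_mul_mod_self_left, Nat.mod_eq_of_lt hb]

lemma kronPow_succ_topBitEquiv (ℓ : ℕ) (T : Matrix (Fin 2) (Fin 2) ℝ) (a c : Fin 2)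
    (b d : Fin (2 ^ ℓ)) :
    kronPow (ℓ + 1) T (topBitEquiv ℓ (a, b)) (topBitEquiv ℓ (c, d)) = T a c * kronPow ℓ T b d := by
  simp only [kronPow, topBitEquiv_apply_val, add_two_pow_mul_div_two_pow b.isLt,
    add_two_pow_mul_div_two_pow d.isLt, add_two_pow_mul_mod_two_pow b.isLt,
    add_two_pow_mul_mod_two_pow d.isLt]

lemma kronPow_transpose (ℓ : ℕ) (T : Matrix (Fin 2) (Fin 2) ℝ) :
    kronPow ℓ Tᵀ = (kronPow ℓ T)ᵀ := by
  induction ℓ with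
  | zero => exact Matrix.transpose_one.symm
  | succ ℓ ih =>
    ext i j
    rw [Matrix.transpose_apply]
    simp only [kronPow, ih, Matrix.transpose_apply]

lemma zeroBits_le (ℓ n : ℕ) : zeroBits ℓ n ≤ ℓ :=
  (card_filter_le _ _).trans_eq (card_range ℓ)

lemma zeroBits_succ (ℓ n : ℕ) :
    zeroBits (ℓ + 1) n = zeroBits ℓ n + if n / 2 ^ ℓ % 2 = 0 then 1 else 0 := by
  unfold zeroBits
  rw [range_add_one, filter_insert]
  split_ifs
  · rw [card_insert_of_notMem (by simp)]
  · rfl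

lemma add_two_pow_mul_div_two_pow_mod_two {ℓ k : ℕ} (hk : k < ℓ) (a b : ℕ) :
    (b + 2 ^ ℓ * a) / 2 ^ k % 2 = b / 2 ^ k % 2 := by
  have h : 2 ^ ℓ * a = 2 ^ k * (2 * (2 ^ (ℓ - k - 1) * a)) := by
    rw [← mul_assoc, ← mul_assoc, ← pow_succ, ← pow_add]; congr 2; omega
  rw [h, Nat.add_mul_div_left _ _ (by positivity), Nat.add_mul_mod_self_left]

lemma zeroBits_add_two_pow_mul (ℓ a b : ℕ) : zeroBits ℓ (b + 2 ^ ℓ * a) = zeroBits ℓ b := by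
  unfold zeroBits
  congr 1
  refine filter_congr fun k hk => ?_
  rw [add_two_pow_mul_div_two_pow_mod_two (mem_range.mp hk)]

section bitWeight

variable {R : Type*} [CommSemiring R]

/-- With `x, y` the two row (resp. column) sums of `T`, this is the row (resp. column) factor
of the Chung–Lu matrix. -/
def bitWeight (x y : R) (ℓ n : ℕ) : R :=
  x ^ zeroBits ℓ n * y ^ (ℓ - zeroBits ℓ n)

lemma bitWeight_topBitEquiv (x y : R) (ℓ : ℕ) (a : Fin 2) (b : Fin (2 ^ ℓ)) :
    bitWeight x y (ℓ + 1) (topBitEquiv ℓ (a, b)) = ![x, y] a * bitWeight x y ℓ b := by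
  have htop : (b.val + 2 ^ ℓ * a.val) / 2 ^ ℓ % 2 = a.val := by
    rw [add_two_pow_mul_div_two_pow b.isLt, Nat.mod_eq_of_lt a.isLt]
  have hle := zeroBits_le ℓ b
  simp only [bitWeight, topBitEquiv_apply_val, zeroBits_succ, zeroBits_add_two_pow_mul, htop]
  fin_cases a
  · simp only [Fin.zero_eta, if_true, Matrix.cons_val_zero, Nat.add_sub_add_right, pow_succ]
    ring
  · simp only [Fin.mk_one, one_ne_zero, if_false, add_zero, Matrix.cons_val_one,
      Matrix.cons_val_fin_one, Nat.sub_add_comm hle, pow_succ]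
    ring

lemma sum_bitWeight (x y : R) (ℓ : ℕ) : ∑ n : Fin (2 ^ ℓ), bitWeight x y ℓ n = (x + y) ^ ℓ := by
  induction ℓ with
  | zero => simp [bitWeight, zeroBits]
  | succ ℓ ih =>
    simp only [sum_fin_two_pow_succ, bitWeight_topBitEquiv, ← mul_sum, ih, Fin.sum_univ_two,
      Matrix.cons_val_zero, Matrix.cons_val_one, Matrix.cons_val_fin_one]
    ring

end bitWeight

lemma sum_kronPow_row (ℓ : ℕ) (T : Matrix (Fin 2) (Fin 2) ℝ) (i : Fin (2 ^ ℓ)) :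
    ∑ j, kronPow ℓ T i j = bitWeight (T 0 0 + T 0 1) (T 1 0 + T 1 1) ℓ i := by
  induction ℓ with
  | zero =>
    obtain rfl : i = 0 := Fin.ext (Nat.lt_one_iff.mp i.isLt)
    simp [kronPow, bitWeight, zeroBits]
  | succ ℓ ih =>
    obtain ⟨⟨a, b⟩, rfl⟩ := (topBitEquiv ℓ).surjective i
    have hrow : ∑ c, T a c = ![T 0 0 + T 0 1, T 1 0 + T 1 1] a := by
      fin_cases a <;> simp [Fin.sum_univ_two]
    simp only [sum_fin_two_pow_succ, kronPow_succ_topBitEquiv, ← mul_sum, ih, ← sum_mul, hrow,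
      bitWeight_topBitEquiv]

lemma sum_kronPow_col (ℓ : ℕ) (T : Matrix (Fin 2) (Fin 2) ℝ) (j : Fin (2 ^ ℓ)) :
    ∑ i, kronPow ℓ T i j = bitWeight (T 0 0 + T 1 0) (T 0 1 + T 1 1) ℓ j := by
  simpa [kronPow_transpose] using sum_kronPow_row ℓ Tᵀ j

theorem skg_cl_same_marginals_general (ℓ : ℕ) (T : Matrix (Fin 2) (Fin 2) ℝ)
    (hsum : T 0 0 + T 0 1 + T 1 0 + T 1 1 = 1) :
    (∀ i : Fin (2 ^ ℓ), ∑ j : Fin (2 ^ ℓ), kronPow ℓ T i j =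
        ∑ j : Fin (2 ^ ℓ),
          (T 0 0 + T 0 1) ^ zeroBits ℓ i.val * (T 1 0 + T 1 1) ^ (ℓ - zeroBits ℓ i.val) *
          (T 0 0 + T 1 0) ^ zeroBits ℓ j.val * (T 0 1 + T 1 1) ^ (ℓ - zeroBits ℓ j.val)) ∧
      (∀ j : Fin (2 ^ ℓ), ∑ i : Fin (2 ^ ℓ), kronPow ℓ T i j =
        ∑ i : Fin (2 ^ ℓ),
          (T 0 0 + T 0 1) ^ zeroBits ℓ i.val * (T 1 0 + T 1 1) ^ (ℓ - zeroBits ℓ i.val) *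
          (T 0 0 + T 1 0) ^ zeroBits ℓ j.val * (T 0 1 + T 1 1) ^ (ℓ - zeroBits ℓ j.val)) := by
  have hCL : ∀ i j : Fin (2 ^ ℓ),
      (T 0 0 + T 0 1) ^ zeroBits ℓ i.val * (T 1 0 + T 1 1) ^ (ℓ - zeroBits ℓ i.val) *
        (T 0 0 + T 1 0) ^ zeroBits ℓ j.val * (T 0 1 + T 1 1) ^ (ℓ - zeroBits ℓ j.val) =
      bitWeight (T 0 0 + T 0 1) (T 1 0 + T 1 1) ℓ i *
        bitWeight (T 0 0 + T 1 0) (T 0 1 + T 1 1) ℓ j := fun _ _ => by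
    simp only [bitWeight]; ring
  refine ⟨fun i => ?_, fun j => ?_⟩
  · rw [sum_kronPow_row]
    simp only [hCL, ← mul_sum, sum_bitWeight, show T 0 0 + T 1 0 + (T 0 1 + T 1 1) = 1 by linarith,
      one_pow, mul_one]
  · rw [sum_kronPow_col]
    simp only [hCL, ← sum_mul, sum_bitWeight, show T 0 0 + T 0 1 + (T 1 0 + T 1 1) = 1 by linarith,
      one_pow, one_mul]

theorem skg_cl_same_marginals (ℓ : ℕ) (T : Matrix (Fin 2) (Fin 2) ℝ)
    (hpos : ∀ a b, 0 < T a b)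
    (hsum : T 0 0 + T 0 1 + T 1 0 + T 1 1 = 1) :
    (∀ i : Fin (2 ^ ℓ), ∑ j : Fin (2 ^ ℓ), kronPow ℓ T i j =
        ∑ j : Fin (2 ^ ℓ),
          (T 0 0 + T 0 1) ^ zeroBits ℓ i.val * (T 1 0 + T 1 1) ^ (ℓ - zeroBits ℓ i.val) *
          (T 0 0 + T 1 0) ^ zeroBits ℓ j.val * (T 0 1 + T 1 1) ^ (ℓ - zeroBits ℓ j.val)) ∧
      (∀ j : Fin (2 ^ ℓ), ∑ i : Fin (2 ^ ℓ), kronPow ℓ T i j =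
        ∑ i : Fin (2 ^ ℓ),
          (T 0 0 + T 0 1) ^ zeroBits ℓ i.val * (T 1 0 + T 1 1) ^ (ℓ - zeroBits ℓ i.val) *
          (T 0 0 + T 1 0) ^ zeroBits ℓ j.val * (T 0 1 + T 1 1) ^ (ℓ - zeroBits ℓ j.val)) :=
  skg_cl_same_marginals_general ℓ T hsum
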